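/- Let (V, w) be an irreducible Whittaker module over R(f) with cyclic Whittaker vector w. Then the set {H^i w : i ≥ 0} is a ℂ-vector space basis of V. -/

import Mathlib

open Polynomial

inductive SmithGen : Type
  | E | F | H

open SmithGen in
inductive SmithRel (f : ℂ[X]) : FreeAlgebra ℂ SmithGen → FreeAlgebra ℂ SmithGen → Prop
  | ef : SmithRel f (FreeAlgebra.ι ℂ E * FreeAlgebra.ι ℂ F - FreeAlgebra.ι ℂ F * FreeAlgebra.ι ℂ E)
      (aeval (FreeAlgebra.ι ℂ H) f)
  | he : SmithRel f (FreeAlgebra.ι ℂ H * FreeAlgebra.ι ℂ E - FreeAlgebra.ι ℂ E * FreeAlgebra.ι ℂ H)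
      (FreeAlgebra.ι ℂ E)
  | hf : SmithRel f (FreeAlgebra.ι ℂ H * FreeAlgebra.ι ℂ F - FreeAlgebra.ι ℂ F * FreeAlgebra.ι ℂ H)
      (-FreeAlgebra.ι ℂ F)

/-- Smith's algebra `R(f)`, similar to `U(sl₂)`. -/
abbrev SmithAlgebra (f : ℂ[X]) : Type := RingQuot (SmithRel f)

noncomputable def SmithE (f : ℂ[X]) : SmithAlgebra f :=
  RingQuot.mkAlgHom ℂ (SmithRel f) (FreeAlgebra.ι ℂ SmithGen.E)

noncomputable def SmithF (f : ℂ[X]) : SmithAlgebra f :=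
  RingQuot.mkAlgHom ℂ (SmithRel f) (FreeAlgebra.ι ℂ SmithGen.F)

noncomputable def SmithH (f : ℂ[X]) : SmithAlgebra f :=
  RingQuot.mkAlgHom ℂ (SmithRel f) (FreeAlgebra.ι ℂ SmithGen.H)

/-- The Casimir element `Ω = 2FE + u(H+1)`. -/
noncomputable def SmithOmega (f u : ℂ[X]) : SmithAlgebra f :=
  2 * SmithF f * SmithE f + aeval (SmithH f) (u.comp (X + 1))

/-!
The difference equation `u(X + 1) - u(X) = 2f` has a polynomial solution (built from Bernoulli
polynomials), and for such `u` the Casimir element `Ω = 2FE + u(H + 1)` is central in `R(f)`.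
Since `R(f)` has countable dimension over `ℂ`, so does `V`, and Dixmier's form of Schur's lemma
makes `Ω` act on `V` by a scalar `ξ`. Evaluating `Ωw = ξw` with `Ew = cw`, `c ≠ 0`, gives
`Fw ∈ ℂ[H]w`; hence `ℂ[H]w` is stable under `E`, `F`, `H` and is all of `V`. Finally `p ↦ p(H)w`
is injective: applying `E` shows that its kernel is stable under `p ↦ p(X - 1)`, and in
characteristic zero a nonzero shift-stable space of polynomials contains a nonzero constant.
-/

open Cardinal

universe u₁ u₂ u₃

namespace Polynomial

theorem exists_comp_X_add_one_sub_eq {K : Type*} [Field K] [CharZero K] (p : K[X]) :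
    ∃ u : K[X], u.comp (X + 1) - u = p := by
  induction p using Polynomial.induction_on' with
  | add p q hp hq =>
    obtain ⟨u, rfl⟩ := hp
    obtain ⟨v, rfl⟩ := hq
    exact ⟨u + v, by rw [add_comp]; abel⟩
  | monomial n a =>
    set B := (bernoulli (n + 1)).map (algebraMap ℚ K)
    have hB : B.comp (X + 1) - B = C ((n : K) + 1) * X ^ n := by
      have := congrArg (map (algebraMap ℚ K)) (bernoulli_comp_one_add_X (n + 1))
      rw [map_comp, Polynomial.map_add, Polynomial.map_one, map_X, add_comm (1 : K[X])] at this
      rw [this]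
      simp [B, nsmul_eq_mul]
    refine ⟨C (a / ((n : K) + 1)) * B, ?_⟩
    rw [mul_comp, C_comp, ← mul_sub, hB, ← mul_assoc, ← C_mul,
      div_mul_cancel₀ _ (Nat.cast_add_one_ne_zero n), C_mul_X_pow_eq_monomial]

variable {R : Type*} [CommRing R] [IsDomain R]

theorem eq_C_of_comp_X_sub_C_eq_self [CharZero R] {a : R} (ha : a ≠ 0) {p : R[X]}
    (hp : p.comp (X - C a) = p) : p = C (p.eval 0) := by
  have heval (n : ℕ) : p.eval (-(n * a)) = p.eval 0 := by
    induction n with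
    | zero => simp
    | succ n ih =>
      calc p.eval (-((n + 1 : ℕ) * a)) = (p.comp (X - C a)).eval (-(n * a)) := by
            rw [eval_comp]; simp only [eval_sub, eval_X, eval_C]; push_cast; ring_nf
        _ = p.eval 0 := by rw [hp, ih]
  refine eq_of_infinite_eval_eq _ _ (Set.infinite_of_injective_forall_mem
    (f := fun n : ℕ ↦ -(n * a)) (fun m n hmn ↦ ?_) fun n ↦ by simp [heval n])
  simpa [ha] using hmn

theorem degree_sub_comp_X_sub_C_lt {p : R[X]} (hp : p ≠ 0) (a : R) :
    (p - p.comp (X - C a)).degree < p.degree := by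
  have hlc : p.leadingCoeff = (p.comp (X - C a)).leadingCoeff := by
    rw [leadingCoeff_comp (by rw [natDegree_X_sub_C]; exact one_ne_zero),
      (monic_X_sub_C a).leadingCoeff, one_pow, mul_one]
  have hcomp : p.comp (X - C a) ≠ 0 := fun h ↦
    hp (by rwa [h, leadingCoeff_zero, leadingCoeff_eq_zero] at hlc)
  refine degree_sub_lt_left ?_ hp hlc
  rw [degree_eq_natDegree hcomp, degree_eq_natDegree hp, natDegree_comp, natDegree_X_sub_C,
    mul_one]

theorem eq_zero_of_mem_of_comp_X_sub_C_mem [CharZero R] {a : R} (ha : a ≠ 0)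
    {S : AddSubgroup R[X]} (hS : ∀ p ∈ S, p.comp (X - C a) ∈ S) (hC : ∀ b : R, C b ∈ S → b = 0) :
    ∀ p ∈ S, p = 0 := by
  intro p hp
  induction hn : p.natDegree using Nat.strong_induction_on generalizing p with
  | _ n ih =>
    have hdiff : p - p.comp (X - C a) = 0 := by
      by_contra hne
      have hp0 : p ≠ 0 := by rintro rfl; simp at hne
      have hlt := degree_sub_comp_X_sub_C_lt hp0 a
      exact hne (ih _ (hn ▸ natDegree_lt_natDegree hne hlt) _ (S.sub_mem hp (hS p hp)) rfl)
    have hconst := eq_C_of_comp_X_sub_C_eq_self ha (sub_eq_zero.1 hdiff).symm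
    have hmem : C (p.eval 0) ∈ S := hconst ▸ hp
    rw [hconst, hC _ hmem, map_zero]

end Polynomial

theorem Subalgebra.isField_center (k : Type u₁) (D : Type u₂) [CommRing k] [DivisionRing D]
    [Algebra k D] :
    IsField (Subalgebra.center k D) where
  exists_pair_ne := ⟨0, 1, zero_ne_one⟩
  mul_comm := mul_comm
  mul_inv_cancel {a} ha :=
    ⟨⟨a⁻¹, Set.inv_mem_center a.2⟩, Subtype.ext (mul_inv_cancel₀ (Subtype.coe_ne_coe.2 ha))⟩

theorem mem_range_algebraMap_of_mem_center {k : Type u₁} {D : Type u₂} [Field k] [IsAlgClosed k]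
    [DivisionRing D] [Algebra k D] (hD : lift.{u₁} (Module.rank k D) < lift.{u₂} #k)
    {x : D} (hx : x ∈ Subalgebra.center k D) : x ∈ (algebraMap k D).range := by
  by_cases halg : IsAlgebraic k x
  · exact minpoly.degree_eq_one_iff.1
      (IsAlgClosed.degree_eq_one_of_irreducible k (minpoly.irreducible halg.isIntegral))
  -- in the field `Z(D)`, a transcendental `x` would give `#k` independent elements `(x - a)⁻¹`
  let : Field (Subalgebra.center k D) := (Subalgebra.isField_center k D).toField
  have htr : Transcendental k (⟨x, hx⟩ : Subalgebra.center k D) :=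
    fun h ↦ halg (h.algHom (Subalgebra.center k D).val)
  have hli := htr.linearIndependent_sub_inv.map' (Subalgebra.center k D).val.toLinearMap
    (LinearMap.ker_eq_bot.2 Subtype.val_injective)
  exact absurd hli.cardinal_lift_le_rank hD.not_ge

theorem IsSimpleModule.exists_smul_eq_of_mem_center {k : Type u₁} {A : Type u₂} {V : Type u₃}
    [Field k] [IsAlgClosed k] [Ring A] [Algebra k A] [AddCommGroup V] [Module k V] [Module A V]
    [IsScalarTower k A V] [IsSimpleModule A V] (hV : lift.{u₁} (Module.rank k V) < lift.{u₃} #k)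
    {z : A} (hz : z ∈ Subalgebra.center k A) : ∃ a : k, ∀ v : V, z • v = a • v := by
  classical
  let T : Module.End A V :=
    { toFun := (z • ·)
      map_add' := smul_add z
      map_smul' := fun r v ↦ by
        rw [RingHom.id_apply, smul_smul, ← Subalgebra.mem_center_iff.1 hz r, mul_smul] }
  have hT : T ∈ Subalgebra.center k (Module.End A V) :=
    Subalgebra.mem_center_iff.2 fun φ ↦ LinearMap.ext fun v ↦ φ.map_smul z v
  have := IsSimpleModule.nontrivial A V
  obtain ⟨v₀, hv₀⟩ := exists_ne (0 : V)
  let eval : Module.End A V →ₗ[k] V := LinearMap.applyₗ' k v₀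
  have heval : Function.Injective eval := by
    refine (injective_iff_map_eq_zero eval).2 fun φ hφ ↦ ?_
    refine φ.injective_or_eq_zero.resolve_left fun hinj ↦ hv₀ (hinj ?_)
    simpa [eval] using hφ
  have hrank : Module.rank k (Module.End A V) ≤ Module.rank k V := by
    simpa using eval.lift_rank_le_of_injective heval
  obtain ⟨a, ha⟩ := mem_range_algebraMap_of_mem_center ((lift_le.2 hrank).trans_lt hV) hT
  exact ⟨a, fun v ↦ by rw [← Module.algebraMap_end_apply k A V, ha]; rfl⟩

theorem SemiconjBy.aeval {R A : Type*} [CommSemiring R] [Semiring A] [Algebra R A] {a x y : A}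
    (h : SemiconjBy a x y) (p : R[X]) : SemiconjBy a (aeval x p) (aeval y p) := by
  induction p using Polynomial.induction_on' with
  | add p q hp hq => simpa only [map_add] using hp.add_right hq
  | monomial n r =>
    simpa only [aeval_monomial] using
      SemiconjBy.mul_right (Algebra.commute_algebraMap_right r a) (h.pow_right n)

section SmithAlgebra

variable (f : ℂ[X])

theorem adjoin_smithE_smithF_smithH :
    Algebra.adjoin ℂ {SmithE f, SmithF f, SmithH f} = ⊤ := by
  have hrange : Set.range (RingQuot.mkAlgHom ℂ (SmithRel f) ∘ FreeAlgebra.ι ℂ) =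
      {SmithE f, SmithF f, SmithH f} := by
    ext x
    simp only [Set.mem_range, Function.comp_apply, Set.mem_insert_iff, Set.mem_singleton_iff]
    constructor
    · rintro ⟨_ | _ | _, rfl⟩ <;> simp [SmithE, SmithF, SmithH]
    · rintro (rfl | rfl | rfl)
      exacts [⟨.E, rfl⟩, ⟨.F, rfl⟩, ⟨.H, rfl⟩]
  rw [← hrange, Set.range_comp, ← AlgHom.map_adjoin, FreeAlgebra.adjoin_range_ι, Algebra.map_top,
    AlgHom.range_eq_top]
  exact RingQuot.mkAlgHom_surjective ℂ (SmithRel f)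

theorem smithE_mul_smithF : SmithE f * SmithF f = SmithF f * SmithE f + aeval (SmithH f) f := by
  have := RingQuot.mkAlgHom_rel ℂ (SmithRel.ef (f := f))
  rw [map_sub, map_mul, map_mul, ← aeval_algHom_apply] at this
  exact sub_eq_iff_eq_add'.1 this

theorem smithH_mul_smithE : SmithH f * SmithE f = SmithE f * SmithH f + SmithE f := by
  have := RingQuot.mkAlgHom_rel ℂ (SmithRel.he (f := f))
  rw [map_sub, map_mul, map_mul] at this
  exact sub_eq_iff_eq_add'.1 this

theorem smithH_mul_smithF : SmithH f * SmithF f = SmithF f * SmithH f - SmithF f := by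
  have := RingQuot.mkAlgHom_rel ℂ (SmithRel.hf (f := f))
  rw [map_sub, map_mul, map_mul, map_neg] at this
  rw [sub_eq_add_neg]
  exact sub_eq_iff_eq_add'.1 this

theorem smithE_mul_aeval_smithH (p : ℂ[X]) :
    SmithE f * aeval (SmithH f) p = aeval (SmithH f) (p.comp (X - C 1)) * SmithE f := by
  have h : SemiconjBy (SmithE f) (SmithH f) (SmithH f - 1) := by
    rw [SemiconjBy, sub_mul, one_mul, smithH_mul_smithE]; abel
  simpa [SemiconjBy, aeval_comp] using h.aeval p

theorem smithF_mul_aeval_smithH (p : ℂ[X]) :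
    SmithF f * aeval (SmithH f) p = aeval (SmithH f) (p.comp (X + 1)) * SmithF f := by
  have h : SemiconjBy (SmithF f) (SmithH f) (SmithH f + 1) := by
    rw [SemiconjBy, add_mul, one_mul, smithH_mul_smithF]; abel
  simpa [SemiconjBy, aeval_comp] using h.aeval p

theorem commute_smithH_smithF_mul_smithE : Commute (SmithH f) (SmithF f * SmithE f) := by
  rw [Commute, SemiconjBy, ← mul_assoc, smithH_mul_smithF, sub_mul, mul_assoc,
    smithH_mul_smithE, mul_add, mul_assoc]
  abel

section Casimir

variable {f} {u : ℂ[X]}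

theorem commute_smithE_smithOmega (hu : u.comp (X + 1) - u = 2 * f) :
    Commute (SmithE f) (SmithOmega f u) := by
  have hu' : aeval (SmithH f) (u.comp (X + 1)) = aeval (SmithH f) u + 2 * aeval (SmithH f) f := by
    rw [← sub_eq_iff_eq_add', ← map_sub, hu, map_mul, map_ofNat]
  calc SmithE f * SmithOmega f u
      = 2 * (SmithE f * SmithF f) * SmithE f + aeval (SmithH f) u * SmithE f := by
        rw [SmithOmega, mul_add, smithE_mul_aeval_smithH, comp_assoc]
        simp only [add_comp, X_comp, one_comp, C_1, sub_add_cancel, comp_X]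
        noncomm_ring
    _ = SmithOmega f u * SmithE f := by
        rw [smithE_mul_smithF, SmithOmega, hu']
        noncomm_ring

theorem commute_smithF_smithOmega (hu : u.comp (X + 1) - u = 2 * f) :
    Commute (SmithF f) (SmithOmega f u) := by
  have hu' : aeval (SmithH f) ((u.comp (X + 1)).comp (X + 1)) =
      aeval (SmithH f) (u.comp (X + 1)) + 2 * aeval (SmithH f) (f.comp (X + 1)) := by
    rw [← sub_eq_iff_eq_add', ← map_sub, ← sub_comp, hu, mul_comp, map_mul, ofNat_comp,
      map_natCast]
    norm_num
  calc SmithF f * SmithOmega f u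
      = 2 * SmithF f * (SmithF f * SmithE f)
          + aeval (SmithH f) ((u.comp (X + 1)).comp (X + 1)) * SmithF f := by
        rw [SmithOmega, mul_add, smithF_mul_aeval_smithH]
        noncomm_ring
    _ = 2 * SmithF f * (SmithE f * SmithF f)
          + aeval (SmithH f) (u.comp (X + 1)) * SmithF f := by
        rw [hu', smithE_mul_smithF, mul_add (2 * SmithF f),
          mul_assoc 2 (SmithF f) (aeval (SmithH f) f), smithF_mul_aeval_smithH]
        noncomm_ring
    _ = SmithOmega f u * SmithF f := by
        rw [SmithOmega]
        noncomm_ring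

theorem commute_smithH_smithOmega : Commute (SmithH f) (SmithOmega f u) := by
  rw [SmithOmega, mul_assoc]
  exact ((Commute.ofNat_right _ 2).mul_right (commute_smithH_smithF_mul_smithE f)).add_right
    ((Commute.refl _).aeval _)

theorem smithOmega_mem_center (hu : u.comp (X + 1) - u = 2 * f) :
    SmithOmega f u ∈ Subalgebra.center ℂ (SmithAlgebra f) := by
  refine Subalgebra.mem_center_iff.2 fun r ↦ (Algebra.commute_of_mem_adjoin_of_forall_mem_commute
    (adjoin_smithE_smithF_smithH f ▸ Algebra.mem_top : r ∈ _) ?_).symm.eq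
  rintro s (rfl | rfl | rfl)
  exacts [(commute_smithE_smithOmega hu).symm, (commute_smithF_smithOmega hu).symm,
    commute_smithH_smithOmega.symm]

end Casimir

instance : Finite SmithGen :=
  Finite.of_surjective ![.E, .F, .H] <| by
    rintro (_ | _ | _)
    exacts [⟨0, rfl⟩, ⟨1, rfl⟩, ⟨2, rfl⟩]

theorem rank_smithAlgebra_le_aleph0 : Module.rank ℂ (SmithAlgebra f) ≤ ℵ₀ :=
  calc Module.rank ℂ (SmithAlgebra f)
      ≤ Module.rank ℂ (FreeAlgebra ℂ SmithGen) :=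
        (RingQuot.mkAlgHom ℂ (SmithRel f)).toLinearMap.rank_le_of_surjective
          (RingQuot.mkAlgHom_surjective ℂ (SmithRel f))
    _ ≤ ℵ₀ := by
        rw [FreeAlgebra.rank_eq, Cardinal.lift_id]
        exact Cardinal.mk_le_aleph0

end SmithAlgebra

section WhittakerModule

variable {f : ℂ[X]} {V : Type} [AddCommGroup V] [Module (SmithAlgebra f) V] [Module ℂ V]
  [IsScalarTower ℂ (SmithAlgebra f) V]

variable (f) in
noncomputable def aevalSmithHSmul (w : V) : ℂ[X] →ₗ[ℂ] V where
  toFun p := aeval (SmithH f) p • w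
  map_add' p q := by rw [map_add, add_smul]
  map_smul' a p := by rw [map_smul, smul_assoc, RingHom.id_apply]

@[simp]
theorem aevalSmithHSmul_apply (w : V) (p : ℂ[X]) :
    aevalSmithHSmul f w p = aeval (SmithH f) p • w :=
  rfl

theorem aeval_smithH_smul_aevalSmithHSmul (w : V) (p q : ℂ[X]) :
    aeval (SmithH f) p • aevalSmithHSmul f w q = aevalSmithHSmul f w (p * q) := by
  rw [aevalSmithHSmul_apply, aevalSmithHSmul_apply, map_mul, mul_smul]

theorem rank_lt_mk_complex {w : V} (hcyc : ∀ v : V, ∃ r : SmithAlgebra f, v = r • w) :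
    Module.rank ℂ V < #ℂ :=
  calc Module.rank ℂ V
      ≤ Module.rank ℂ (SmithAlgebra f) :=
        LinearMap.rank_le_of_surjective
          ((LinearMap.toSpanSingleton (SmithAlgebra f) V w).restrictScalars ℂ)
          fun v ↦ (hcyc v).imp fun _ hr ↦ hr.symm
    _ ≤ ℵ₀ := rank_smithAlgebra_le_aleph0 f
    _ < #ℂ := Cardinal.mk_complex ▸ Cardinal.aleph0_lt_continuum

variable {c : ℂ} {w : V}

theorem smithE_smul_aevalSmithHSmul (hw : SmithE f • w = c • w) (p : ℂ[X]) :
    SmithE f • aevalSmithHSmul f w p = c • aevalSmithHSmul f w (p.comp (X - C 1)) := by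
  rw [aevalSmithHSmul_apply, aevalSmithHSmul_apply, ← mul_smul, smithE_mul_aeval_smithH,
    mul_smul, hw, smul_comm]

theorem aevalSmithHSmul_injective (hc : c ≠ 0) (hw : SmithE f • w = c • w) (hw₀ : w ≠ 0) :
    Function.Injective (aevalSmithHSmul f w) := by
  refine (injective_iff_map_eq_zero _).2 fun p hp ↦ eq_zero_of_mem_of_comp_X_sub_C_mem
    one_ne_zero (S := (LinearMap.ker (aevalSmithHSmul f w)).toAddSubgroup)
    (fun q hq ↦ ?_) (fun b hb ↦ ?_) p hp
  · have := smithE_smul_aevalSmithHSmul hw q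
    rw [LinearMap.mem_ker.1 hq, smul_zero, eq_comm, smul_eq_zero] at this
    exact this.resolve_left hc
  · rw [Submodule.mem_toAddSubgroup, LinearMap.mem_ker, aevalSmithHSmul_apply, aeval_C,
      algebraMap_smul, smul_eq_zero] at hb
    exact hb.resolve_right hw₀

theorem smithF_smul_mem_range (hc : c ≠ 0) (hw : SmithE f • w = c • w) {u : ℂ[X]} {ξ : ℂ}
    (hξ : SmithOmega f u • w = ξ • w) :
    SmithF f • w ∈ LinearMap.range (aevalSmithHSmul f w) := by
  have hΩ : SmithOmega f u • w =
      (2 * c) • SmithF f • w + aeval (SmithH f) (u.comp (X + 1)) • w := by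
    rw [SmithOmega, add_smul, mul_smul, hw, mul_smul, smul_comm (SmithF f) c,
      ← map_ofNat (algebraMap ℂ _) 2, algebraMap_smul, smul_smul]
  have h2c := eq_sub_of_add_eq (hΩ ▸ hξ)
  refine ⟨C (2 * c)⁻¹ * (C ξ - u.comp (X + 1)), ?_⟩
  rw [aevalSmithHSmul_apply, map_mul, map_sub, aeval_C, aeval_C, mul_smul, algebraMap_smul,
    sub_smul, algebraMap_smul, ← h2c, smul_smul, inv_mul_cancel₀ (mul_ne_zero two_ne_zero hc),
    one_smul]

theorem aevalSmithHSmul_surjective (hw : SmithE f • w = c • w)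
    (hF : SmithF f • w ∈ LinearMap.range (aevalSmithHSmul f w))
    (hcyc : ∀ v : V, ∃ r : SmithAlgebra f, v = r • w) :
    Function.Surjective (aevalSmithHSmul f w) := by
  set W := LinearMap.range (aevalSmithHSmul f w)
  have hstable : ∀ r : SmithAlgebra f, ∀ v ∈ W, r • v ∈ W := by
    intro r
    have hr : r ∈ Algebra.adjoin ℂ {SmithE f, SmithF f, SmithH f} := by
      rw [adjoin_smithE_smithF_smithH]; exact Algebra.mem_top
    induction hr using Algebra.adjoin_induction with
    | mem s hs =>
      rintro _ ⟨p, rfl⟩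
      rcases hs with rfl | rfl | rfl
      · rw [smithE_smul_aevalSmithHSmul hw]
        exact W.smul_mem c ⟨_, rfl⟩
      · obtain ⟨q, hq⟩ := hF
        rw [aevalSmithHSmul_apply, ← mul_smul, smithF_mul_aeval_smithH, mul_smul, ← hq,
          aeval_smithH_smul_aevalSmithHSmul]
        exact ⟨_, rfl⟩
      · rw [← aeval_X (R := ℂ) (SmithH f), aeval_smithH_smul_aevalSmithHSmul]
        exact ⟨_, rfl⟩
    | algebraMap a =>
      intro v hv
      rw [algebraMap_smul]
      exact W.smul_mem a hv
    | add r s _ _ hr hs =>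
      intro v hv
      rw [add_smul]
      exact W.add_mem (hr v hv) (hs v hv)
    | mul r s _ _ hr hs =>
      intro v hv
      rw [mul_smul]
      exact hr _ (hs v hv)
  intro v
  obtain ⟨r, rfl⟩ := hcyc v
  exact hstable r w ⟨1, by rw [aevalSmithHSmul_apply, map_one, one_smul]⟩

end WhittakerModule

/-- For an irreducible Whittaker module `(V, w)`, the family `{Hⁱ·w : i ≥ 0}` is a
`ℂ`-vector space basis of `V`. -/
theorem smith_irreducible_whittaker_basis (f : ℂ[X]) (c : ℂ) (hc : c ≠ 0)
    (V : Type) [AddCommGroup V] [Module (SmithAlgebra f) V]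
    [Module ℂ V] [IsScalarTower ℂ (SmithAlgebra f) V] (w : V)
    (hw : SmithE f • w = algebraMap ℂ (SmithAlgebra f) c • w)
    (hcyc : ∀ v : V, ∃ r : SmithAlgebra f, v = r • w)
    (hirr : IsSimpleModule (SmithAlgebra f) V) :
    ∃ b : Module.Basis ℕ ℂ V, ∀ i : ℕ, b i = (SmithH f ^ i) • w := by
  rw [algebraMap_smul] at hw
  have hw₀ : w ≠ 0 := by
    rintro rfl
    have := IsSimpleModule.nontrivial (SmithAlgebra f) V
    obtain ⟨v, hv⟩ := exists_ne (0 : V)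
    obtain ⟨r, rfl⟩ := hcyc v
    exact hv (smul_zero r)
  obtain ⟨u, hu⟩ := exists_comp_X_add_one_sub_eq (2 * f)
  obtain ⟨ξ, hξ⟩ := IsSimpleModule.exists_smul_eq_of_mem_center
    (lift_lt.2 (rank_lt_mk_complex hcyc)) (smithOmega_mem_center hu)
  let e := LinearEquiv.ofBijective (aevalSmithHSmul f w) ⟨aevalSmithHSmul_injective hc hw hw₀,
    aevalSmithHSmul_surjective hw (smithF_smul_mem_range hc hw (hξ w)) hcyc⟩
  refine ⟨(basisMonomials ℂ).map e, fun i ↦ ?_⟩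
  change aevalSmithHSmul f w (monomial i 1) = _
  simp
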